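/- arXiv:1708.09557 — 3 statements merged into one kernel-verified Lean document; each statement's English description precedes it below -/
import Mathlib

section
/- Let M(x) = A₀ + x₁A₁ + ⋯ + xₙAₙ be a linear matrix polynomial of size d with complex d×d coefficient matrices. Fix exponents k₁,…,kₙ ∈ {0,…,d} with k₁ + ⋯ + kₙ = ℓ ≤ d. Then the iterated partial derivative ∂^{k₁+⋯+kₙ}(det M)/∂x₁^{k₁}⋯∂xₙ^{kₙ}, evaluated at x₁ = ⋯ = xₙ = 0, equals (k₁!⋯kₙ!) times the generalized mixed discriminant sum Σ_φ det(M_φ), where the sum ranges over all functions φ : {1,…,d} → {0,1,…,n} such that |φ⁻¹(i)| = kᵢ for each i = 1,…,n (so |φ⁻¹(0)| = d − ℓ), and M_φ is the d×d matrix whose j-th row is the j-th row of A_{φ(j)}. -/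
/-!
Row `j` of `M(x)` is `∑ₒ xₒ • (row j of Aₒ)` with `x₀ = 1`, so multilinearity of the determinant
in the rows gives `det M = ∑_φ x^{deg φ} det M_φ`, where `(deg φ)ᵢ = |φ⁻¹(i)|`. Applying
`∂^{k₁}/∂x₁^{k₁} ⋯ ∂^{kₙ}/∂xₙ^{kₙ}` to a monomial `c xᵐ` and evaluating at `0` gives
`c k₁! ⋯ kₙ!` if `m = k` and `0` otherwise, which leaves exactly the `φ` with `deg φ = k`.
-/

open Finset Matrix MvPolynomial

theorem List.foldl_apply_sum {ι α M F : Type*} [AddCommMonoid M] [FunLike F M M]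
    [AddMonoidHomClass F M M] (g : ι → F) (L : List ι) (s : Finset α) (f : α → M) :
    L.foldl (fun p i => g i p) (∑ x ∈ s, f x) = ∑ x ∈ s, L.foldl (fun p i => g i p) (f x) := by
  induction L generalizing f with
  | nil => rfl
  | cons a L ih => simp only [List.foldl_cons, map_sum, ih]

namespace Matrix

theorem det_of_sum_smul {ι κ R : Type*} [Fintype ι] [DecidableEq ι] [Fintype κ] [CommRing R]
    (w : κ → R) (v : κ → ι → ι → R) :
    det (of fun j => ∑ o, w o • v o j)
      = ∑ φ : ι → κ, (∏ j, w (φ j)) * det (of fun j => v (φ j) j) := by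
  let D := (detRowAlternating : (ι → R) [⋀^ι]→ₗ[R] R).toMultilinearMap
  change D (fun j => ∑ o, w o • v o j) = ∑ φ : ι → κ, (∏ j, w (φ j)) * D fun j => v (φ j) j
  simp only [D.map_sum, D.map_smul_univ, smul_eq_mul]

/-- The paper's `M_φ`: row `j` is row `j` of `A_{φ j}`, where `none` stands for the index `0`. -/
def rowMix {ι κ R : Type*} (A₀ : Matrix ι ι R) (A : κ → Matrix ι ι R) (φ : ι → Option κ) :
    Matrix ι ι R :=
  of fun j l => (φ j).elim (A₀ j l) fun i => A i j l

end Matrix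

namespace MvPolynomial

variable {ι σ R : Type*}

section IteratedPDeriv

variable [CommSemiring R]

theorem iterate_pderiv_monomial (i : σ) (t : ℕ) (m : σ →₀ ℕ) (c : R) :
    (fun q => pderiv i q)^[t] (monomial m c)
      = monomial (m - Finsupp.single i t) (c * (m i).descFactorial t) := by
  induction t with
  | zero => simp
  | succ t ih =>
    rw [Function.iterate_succ_apply', ih, pderiv_monomial, tsub_tsub, ← Finsupp.single_add,
      Finsupp.tsub_apply, Finsupp.single_eq_same, Nat.descFactorial_succ]
    rw [Nat.cast_mul, mul_comm ((m i - t : ℕ) : R), mul_assoc]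

theorem foldl_iterate_pderiv_monomial [DecidableEq σ] (k : σ → ℕ) {L : List σ} (hL : L.Nodup)
    (m : σ →₀ ℕ) (c : R) :
    L.foldl (fun p i => (fun q => pderiv i q)^[k i] p) (monomial m c)
      = monomial (m - ∑ i ∈ L.toFinset, Finsupp.single i (k i))
          (c * ∏ i ∈ L.toFinset, ((m i).descFactorial (k i) : R)) := by
  induction L generalizing m c with
  | nil => simp
  | cons a L ih =>
    obtain ⟨haL, hL⟩ := List.nodup_cons.mp hL
    have hm : ∀ i ∈ L.toFinset, (m - Finsupp.single a (k a)) i = m i := fun i hi => by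
      have : a ≠ i := by rintro rfl; exact haL (List.mem_toFinset.mp hi)
      simp [this]
    rw [List.foldl_cons, iterate_pderiv_monomial, ih hL, prod_congr rfl fun i hi => by rw [hm i hi],
      List.toFinset_cons, sum_insert (by simpa using haL), prod_insert (by simpa using haL),
      tsub_tsub, mul_assoc]

theorem eval_zero_foldl_iterate_pderiv_monomial [Fintype σ] [DecidableEq σ] (k : σ → ℕ)
    {L : List σ} (hL : L.Nodup) (hmem : ∀ i, i ∈ L) (m : σ →₀ ℕ) (c : R) :
    eval 0 (L.foldl (fun p i => (fun q => pderiv i q)^[k i] p) (monomial m c))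
      = if ∀ i, m i = k i then c * ∏ i, ((k i).factorial : R) else 0 := by
  have hL_univ : L.toFinset = univ := eq_univ_of_forall fun i => List.mem_toFinset.mpr (hmem i)
  rw [foldl_iterate_pderiv_monomial k hL, hL_univ, ← Finsupp.equivFunOnFinite_symm_eq_sum,
    eval_zero, constantCoeff_monomial]
  simp only [tsub_eq_zero_iff_le, Finsupp.le_def, Finsupp.coe_equivFunOnFinite_symm]
  by_cases hk : ∀ i, m i = k i
  · simp [hk, Nat.descFactorial_self]
  · obtain ⟨i, hi⟩ := not_forall.mp hk
    rw [if_neg hk, ite_eq_right_iff]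
    intro hle
    have hzero : ((m i).descFactorial (k i) : R) = 0 := by
      rw [Nat.descFactorial_eq_zero_iff_lt.mpr ((hle i).lt_of_ne hi), Nat.cast_zero]
    rw [prod_eq_zero (mem_univ i) hzero, mul_zero]

end IteratedPDeriv

section RowExpansion

variable [Fintype ι]

noncomputable def rowDegree (φ : ι → Option σ) : σ →₀ ℕ :=
  ∑ j, (φ j).elim 0 fun i => Finsupp.single i 1

theorem rowDegree_apply [DecidableEq σ] (φ : ι → Option σ) (i : σ) :
    rowDegree φ i = #{j | φ j = some i} := by
  rw [rowDegree, Finsupp.finsetSum_apply, card_filter]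
  refine sum_congr rfl fun j _ => ?_
  cases φ j <;> simp [Finsupp.single_apply]

theorem prod_elim_X_eq_monomial [CommSemiring R] (φ : ι → Option σ) :
    ∏ j, (φ j).elim (1 : MvPolynomial σ R) X = monomial (rowDegree φ) 1 := by
  rw [rowDegree, monomial_sum_one]
  refine prod_congr rfl fun j _ => ?_
  cases φ j <;> rfl

theorem det_add_sum_X_smul_map_C [DecidableEq ι] [Fintype σ] [CommRing R]
    (A₀ : Matrix ι ι R) (A : σ → Matrix ι ι R) :
    det (A₀.map C + ∑ i, (X i : MvPolynomial σ R) • (A i).map C : Matrix ι ι (MvPolynomial σ R))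
      = ∑ φ : ι → Option σ, monomial (rowDegree φ) (det (rowMix A₀ A φ)) := by
  have hrows :
      (A₀.map C + ∑ i, (X i : MvPolynomial σ R) • (A i).map C : Matrix ι ι (MvPolynomial σ R))
        = of fun j => ∑ o : Option σ, o.elim (1 : MvPolynomial σ R) X • fun l =>
            C (o.elim A₀ A j l) := by
    ext j l
    simp [Fintype.sum_option, Matrix.sum_apply]
  have hmap (φ : ι → Option σ) :
      (of fun j l => C ((φ j).elim A₀ A j l) : Matrix ι ι (MvPolynomial σ R))
        = (C : R →+* MvPolynomial σ R).mapMatrix (rowMix A₀ A φ) := by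
    ext j l : 1
    simp only [of_apply, RingHom.mapMatrix_apply, map_apply, rowMix]
    cases φ j <;> rfl
  rw [hrows, det_of_sum_smul]
  refine sum_congr rfl fun φ _ => ?_
  rw [prod_elim_X_eq_monomial, hmap, ← RingHom.map_det, mul_comm, C_mul_monomial, mul_one]

end RowExpansion

end MvPolynomial

theorem iterated_pderiv_det_eq_generalized_mixed_discriminant_general (n d : ℕ)
    (A₀ : Matrix (Fin d) (Fin d) ℂ) (A : Fin n → Matrix (Fin d) (Fin d) ℂ)
    (k : Fin n → ℕ) :
    MvPolynomial.eval (0 : Fin n → ℂ)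
      ((List.finRange n).foldl
        (fun p i => (fun q => MvPolynomial.pderiv i q)^[k i] p)
        (Matrix.det (A₀.map MvPolynomial.C +
          ∑ i : Fin n, (MvPolynomial.X i : MvPolynomial (Fin n) ℂ) • (A i).map MvPolynomial.C))) =
    (∏ i : Fin n, (Nat.factorial (k i) : ℂ)) *
      ∑ φ ∈ Finset.univ.filter
          (fun φ : Fin d → Option (Fin n) =>
            ∀ i : Fin n, (Finset.univ.filter (fun j : Fin d => φ j = some i)).card = k i),
        Matrix.det (Matrix.of fun j l : Fin d => (φ j).elim (A₀ j l) (fun i => A i j l)) := by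
  have hstep : (fun p i => (fun q => pderiv i q)^[k i] p)
      = fun (p : MvPolynomial (Fin n) ℂ) i => ((pderiv i).toLinearMap ^ k i) p := by
    funext p i
    rw [Module.End.coe_pow]
    rfl
  rw [det_add_sum_X_smul_map_C, hstep, List.foldl_apply_sum, map_sum, ← hstep]
  simp_rw [eval_zero_foldl_iterate_pderiv_monomial k (List.nodup_finRange n) List.mem_finRange,
    rowDegree_apply]
  rw [← sum_filter, mul_sum]
  exact sum_congr rfl fun φ _ => mul_comm _ _

/-- Lemma 2.3 (paper): for a linear matrix polynomial `M(x) = A₀ + x₁ A₁ + ⋯ + xₙ Aₙ` of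
size `d` and exponents `k₁, …, kₙ ≤ d` with `k₁ + ⋯ + kₙ = ℓ ≤ d`, the iterated partial
derivative `∂^{k₁+⋯+kₙ}(det M)/∂x₁^{k₁}⋯∂xₙ^{kₙ}` evaluated at `0` equals
`k₁!⋯kₙ!` times the generalized mixed discriminant
`D̂(A₀,…,A₀ (d−ℓ times), A₁,…,A₁ (k₁ times), …, Aₙ,…,Aₙ (kₙ times))`, expressed as the sum
over row-assignments `φ : Fin d → Option (Fin n)` with `|φ⁻¹ i| = kᵢ` of the determinant of
the matrix whose `j`-th row is the `j`-th row of `A_{φ j}` (of `A₀` if `φ j = none`). -/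
theorem iterated_pderiv_det_eq_generalized_mixed_discriminant (n d : ℕ)
    (A₀ : Matrix (Fin d) (Fin d) ℂ) (A : Fin n → Matrix (Fin d) (Fin d) ℂ)
    (k : Fin n → ℕ) (ℓ : ℕ) (hk : ∀ i, k i ≤ d) (hsum : ∑ i, k i = ℓ) (hℓ : ℓ ≤ d) :
    MvPolynomial.eval (0 : Fin n → ℂ)
      ((List.finRange n).foldl
        (fun p i => (fun q => MvPolynomial.pderiv i q)^[k i] p)
        (Matrix.det (A₀.map MvPolynomial.C +
          ∑ i : Fin n, (MvPolynomial.X i : MvPolynomial (Fin n) ℂ) • (A i).map MvPolynomial.C))) =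
    (∏ i : Fin n, (Nat.factorial (k i) : ℂ)) *
      ∑ φ ∈ Finset.univ.filter
          (fun φ : Fin d → Option (Fin n) =>
            ∀ i : Fin n, (Finset.univ.filter (fun j : Fin d => φ j = some i)).card = k i),
        Matrix.det (Matrix.of fun j l : Fin d => (φ j).elim (A₀ j l) (fun i => A i j l)) :=
  iterated_pderiv_det_eq_generalized_mixed_discriminant_general n d A₀ A k
end

section
/- Let r₁,…,r_d ∈ ℝ and let G be the d×d matrix whose (k,j) entry (for k,j = 1,…,d) is the (k−1)-th elementary symmetric polynomial e_{k−1} evaluated at the d−1 numbers {rᵢ : i ≠ j}. Then G is invertible if and only if r₁,…,r_d are pairwise distinct. -/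
/-!
With `s_j = {rᵢ : i ≠ j}`, Vieta's formula says that the `j`-th column of `G`, read against the
vector `((-1)ᵏ xᵈ⁻¹⁻ᵏ)ₖ`, evaluates `∏_{i ≠ j} (x - rᵢ)`. Taking `x = r_l` gives
`Gᵀ V = diag(∏_{i ≠ j} (r_j - rᵢ))` for the signed power matrix `V`, so `G` is invertible when the
`rᵢ` are distinct. Conversely, if `r_a = r_b` with `a ≠ b` then `s_a = s_b` as multisets, so
columns `a` and `b` of `G` coincide.
-/

open Matrix Polynomial Finset

theorem Multiset.prod_sub_eq_sum_esymm {R : Type*} [CommRing R] (s : Multiset R) (x : R) :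
    (s.map fun t => x - t).prod =
      ∑ k ∈ Finset.range (card s + 1), (-1) ^ k * s.esymm k * x ^ (card s - k) := by
  simpa [eval_multiset_prod, eval_finsetSum, mul_assoc] using
    congrArg (eval x) (prod_X_sub_X_eq_sum_esymm s)

theorem Finset.map_erase_val_eq_of_apply_eq {ι α : Type*} [DecidableEq ι] {s : Finset ι}
    (f : ι → α) {a b : ι} (ha : a ∈ s) (hb : b ∈ s) (hab : f a = f b) :
    (s.erase a).val.map f = (s.erase b).val.map f := by
  rw [← Multiset.cons_inj_right (f a), ← Multiset.map_cons, erase_val,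
    Multiset.cons_erase ha, hab, ← Multiset.map_cons, erase_val, Multiset.cons_erase hb]

section EsymmComplMatrix

variable {R : Type*} [CommRing R] {d : ℕ} (r : Fin d → R)

noncomputable def esymmComplMatrix : Matrix (Fin d) (Fin d) R :=
  of fun k j => ((univ.erase j).val.map r).esymm k

def signedPowMatrix : Matrix (Fin d) (Fin d) R :=
  of fun k l => (-1) ^ (k : ℕ) * r l ^ (d - 1 - k)

theorem esymmComplMatrix_transpose_mul_signedPowMatrix :
    (esymmComplMatrix r)ᵀ * signedPowMatrix r =
      diagonal fun j => ∏ i ∈ univ.erase j, (r j - r i) := by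
  ext j l
  have hcard : Multiset.card ((univ.erase j).val.map r) = d - 1 := by simp
  have hd : d - 1 + 1 = d := Nat.sub_add_cancel j.pos
  have hvieta := Multiset.prod_sub_eq_sum_esymm ((univ.erase j).val.map r) (r l)
  rw [hcard, hd, Multiset.map_map, Function.comp_def] at hvieta
  have hentry : ((esymmComplMatrix r)ᵀ * signedPowMatrix r) j l =
      ∏ i ∈ univ.erase j, (r l - r i) := by
    rw [mul_apply, prod_eq_multiset_prod, hvieta, ← Fin.sum_univ_eq_sum_range]
    refine Finset.sum_congr rfl fun k _ => ?_
    simp only [transpose_apply, esymmComplMatrix, signedPowMatrix, of_apply]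
    ring
  rw [hentry, diagonal_apply]
  split_ifs with hjl
  · rw [hjl]
  · exact prod_eq_zero (mem_erase.2 ⟨Ne.symm hjl, mem_univ l⟩) (sub_self _)

theorem isUnit_esymmComplMatrix_of_pairwise_isUnit_sub
    (h : Pairwise fun i j => IsUnit (r i - r j)) : IsUnit (esymmComplMatrix r) := by
  have hdet := congrArg det (esymmComplMatrix_transpose_mul_signedPowMatrix r)
  rw [det_mul, det_transpose, det_diagonal] at hdet
  have hunit : IsUnit (∏ j, ∏ i ∈ univ.erase j, (r j - r i)) :=
    IsUnit.prod_univ_iff.2 fun j => IsUnit.prod_iff.2 fun i hi => h (ne_of_mem_erase hi).symm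
  rw [isUnit_iff_isUnit_det]
  exact isUnit_of_mul_isUnit_left (hdet ▸ hunit)

theorem injective_of_isUnit_esymmComplMatrix [Nontrivial R] (h : IsUnit (esymmComplMatrix r)) :
    Function.Injective r := by
  intro a b hab
  by_contra hne
  have hcol : ∀ k, esymmComplMatrix r k a = esymmComplMatrix r k b := fun k => by
    simp only [esymmComplMatrix, of_apply,
      map_erase_val_eq_of_apply_eq r (mem_univ a) (mem_univ b) hab]
  rw [isUnit_iff_isUnit_det, det_zero_of_column_eq hne hcol] at h
  exact not_isUnit_zero h

end EsymmComplMatrix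

/-- Lemma 3.5 (paper): the matrix `G` whose `(k, j)` entry is the `k`-th elementary
symmetric polynomial of the `d − 1` numbers `{rᵢ : i ≠ j}` (rows indexed from `e₀ = 1`)
is invertible iff `r₁, …, r_d` are pairwise distinct. -/
theorem esymm_matrix_invertible_iff_distinct (d : ℕ) (r : Fin d → ℝ) :
    IsUnit (Matrix.of fun k j : Fin d =>
        ∑ S ∈ (Finset.univ.erase j).powersetCard (k : ℕ), ∏ i ∈ S, r i) ↔
      Function.Injective r := by
  have hG : (Matrix.of fun k j : Fin d =>
      ∑ S ∈ (univ.erase j).powersetCard (k : ℕ), ∏ i ∈ S, r i) = esymmComplMatrix r := by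
    ext k j
    rw [esymmComplMatrix, of_apply, of_apply, esymm_map_val]
  rw [hG]
  exact ⟨injective_of_isUnit_esymmComplMatrix r, fun hr =>
    isUnit_esymmComplMatrix_of_pairwise_isUnit_sub r fun i j hij =>
      (sub_ne_zero.2 (hr.ne hij)).isUnit⟩
end

section
/- Let D = diag(r₁,…,r_d) be a real diagonal d×d matrix and let A be any real d×d matrix. Then for each m with 0 ≤ m ≤ d−1, the coefficient of the monomial x₁^m·x₂ in the bivariate polynomial det(I + x₁·D + x₂·A) ∈ ℝ[x₁,x₂] equals Σ_{j=1}^{d} A_{jj} · e_m({rᵢ : i ≠ j}), where e_m denotes the m-th elementary symmetric polynomial of the d−1 numbers rᵢ with i ≠ j. In particular, these coefficients depend only on the diagonal entries of A, linearly. -/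
open Matrix MvPolynomial

open Finset in
private lemma mu_eq_iff (k l m : ℕ) :
    ((Finsupp.single (1 : Fin 2) k + Finsupp.single (0 : Fin 2) l : Fin 2 →₀ ℕ) =
      Finsupp.single (0 : Fin 2) m + Finsupp.single (1 : Fin 2) 1) ↔ (k = 1 ∧ l = m) := by
  constructor
  · intro h
    refine ⟨?_, ?_⟩
    · have := DFunLike.congr_fun h 1
      simpa using this
    · have := DFunLike.congr_fun h 0
      simpa using this
  · rintro ⟨rfl, rfl⟩; exact add_comm _ _

private lemma gen_coeff {d : ℕ} (s : Finset (Fin d)) (p q c : Fin d → ℝ) (m : ℕ) :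
    MvPolynomial.coeff (Finsupp.single (0 : Fin 2) m + Finsupp.single (1 : Fin 2) 1)
      (∏ i ∈ s, (C (p i) + C (q i) * X 0 + C (c i) * X 1 : MvPolynomial (Fin 2) ℝ)) =
    ∑ j ∈ s, c j * ∑ S ∈ ((s.erase j).powersetCard m),
        (∏ i ∈ S, q i) * ∏ i ∈ (s.erase j) \ S, p i := by
  have hfac : ∀ i : Fin d, (C (p i) + C (q i) * X 0 + C (c i) * X 1 : MvPolynomial (Fin 2) ℝ)
      = (C (c i) * X 1) + (C (q i) * X 0 + C (p i)) := by intro i; ring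
  rw [Finset.prod_congr rfl fun i _ => hfac i, Finset.prod_add]
  have hinner : ∀ T : Finset (Fin d),
      (∏ i ∈ s \ T, ((C (q i) * X 0 + C (p i)) : MvPolynomial (Fin 2) ℝ))
      = ∑ S ∈ (s \ T).powerset,
          (monomial (Finsupp.single (0:Fin 2) S.card))
            ((∏ i ∈ S, q i) * ∏ i ∈ (s \ T) \ S, p i) := by
    intro T
    rw [Finset.prod_add]
    refine Finset.sum_congr rfl fun S _ => ?_
    rw [Finset.prod_mul_distrib, ← map_prod, Finset.prod_const, X_pow_eq_monomial, ← map_prod,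
      C_mul_monomial, mul_one, C_apply, monomial_mul]
    simp
  have houter : ∀ T : Finset (Fin d),
      (∏ i ∈ T, (C (c i) * X 1 : MvPolynomial (Fin 2) ℝ))
      = monomial (Finsupp.single (1:Fin 2) T.card) (∏ i ∈ T, c i) := by
    intro T
    rw [Finset.prod_mul_distrib, ← map_prod, Finset.prod_const, X_pow_eq_monomial, C_mul_monomial]
    simp
  calc MvPolynomial.coeff (Finsupp.single (0 : Fin 2) m + Finsupp.single (1 : Fin 2) 1)
        (∑ T ∈ s.powerset, (∏ i ∈ T, (C (c i) * X 1 : MvPolynomial (Fin 2) ℝ)) *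
          ∏ i ∈ s \ T, (C (q i) * X 0 + C (p i)))
      = ∑ T ∈ s.powerset, ∑ S ∈ (s \ T).powerset,
          (if T.card = 1 ∧ S.card = m then
            (∏ i ∈ T, c i) * ((∏ i ∈ S, q i) * ∏ i ∈ (s \ T) \ S, p i) else 0) := by
        rw [MvPolynomial.coeff_sum]
        refine Finset.sum_congr rfl fun T _ => ?_
        rw [houter, hinner, Finset.mul_sum, MvPolynomial.coeff_sum]
        refine Finset.sum_congr rfl fun S _ => ?_
        rw [monomial_mul, MvPolynomial.coeff_monomial]
        simp only [mu_eq_iff]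
    _ = ∑ T ∈ s.powerset, (if T.card = 1 then
          (∏ i ∈ T, c i) * ∑ S ∈ ((s \ T).powersetCard m),
            (∏ i ∈ S, q i) * ∏ i ∈ (s \ T) \ S, p i else 0) := by
        refine Finset.sum_congr rfl fun T _ => ?_
        split_ifs with h
        · rw [Finset.mul_sum, Finset.powersetCard_eq_filter, Finset.sum_filter]
          refine Finset.sum_congr rfl fun S _ => ?_
          simp [h]
        · simp [h]
    _ = ∑ j ∈ s, c j * ∑ S ∈ ((s.erase j).powersetCard m),
          (∏ i ∈ S, q i) * ∏ i ∈ (s.erase j) \ S, p i := by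
        rw [← Finset.sum_filter, ← Finset.powersetCard_eq_filter, Finset.powersetCard_one,
          Finset.sum_map]
        refine Finset.sum_congr rfl fun j _ => ?_
        simp [← Finset.erase_eq]

/-- For `D = diag(r₁,…,r_d)` and any real `d × d` matrix `A`, the coefficient of
`x₁^m · x₂` (with `m ≤ d − 1`) in `det(I + x₁ D + x₂ A)` equals
`Σⱼ A_{jj} · e_m({rᵢ : i ≠ j})`; in particular it depends linearly on the diagonal of `A`. -/
theorem coeff_pow_mul_det_diagonal (d : ℕ) (r : Fin d → ℝ)
    (A : Matrix (Fin d) (Fin d) ℝ) (m : ℕ) (hm : m ≤ d - 1) :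
    MvPolynomial.coeff (Finsupp.single (0 : Fin 2) m + Finsupp.single (1 : Fin 2) 1)
      (Matrix.det ((1 : Matrix (Fin d) (Fin d) (MvPolynomial (Fin 2) ℝ)) +
        (MvPolynomial.X 0 : MvPolynomial (Fin 2) ℝ) • (Matrix.diagonal r).map MvPolynomial.C +
        (MvPolynomial.X 1 : MvPolynomial (Fin 2) ℝ) • A.map MvPolynomial.C)) =
    ∑ j : Fin d, A j j * ∑ S ∈ (Finset.univ.erase j).powersetCard m, ∏ i ∈ S, r i := by
  classical
  set μ : Fin 2 →₀ ℕ := Finsupp.single (0 : Fin 2) m + Finsupp.single (1 : Fin 2) 1 with hμ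
  set M : Matrix (Fin d) (Fin d) (MvPolynomial (Fin 2) ℝ) :=
    (1 : Matrix (Fin d) (Fin d) (MvPolynomial (Fin 2) ℝ)) +
      (MvPolynomial.X 0 : MvPolynomial (Fin 2) ℝ) • (Matrix.diagonal r).map MvPolynomial.C +
      (MvPolynomial.X 1 : MvPolynomial (Fin 2) ℝ) • A.map MvPolynomial.C with hMdef
  have hM : ∀ (σ : Equiv.Perm (Fin d)) (i : Fin d),
      M (σ i) i = C (if σ i = i then (1:ℝ) else 0) + C (if σ i = i then r i else 0) * X 0
        + C (A (σ i) i) * X 1 := by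
    intro σ i
    by_cases h : σ i = i <;>
      simp [hMdef, Matrix.add_apply, Matrix.one_apply, Matrix.smul_apply, Matrix.map_apply,
        Matrix.diagonal_apply, h, smul_eq_mul, mul_comm]
  have hprod : ∀ σ : Equiv.Perm (Fin d),
      MvPolynomial.coeff μ (∏ i, M (σ i) i) =
      ∑ j : Fin d, A (σ j) j * ∑ S ∈ ((Finset.univ.erase j).powersetCard m),
        (∏ i ∈ S, if σ i = i then r i else 0) *
          ∏ i ∈ (Finset.univ.erase j) \ S, (if σ i = i then (1:ℝ) else 0) := by
    intro σ
    rw [Finset.prod_congr rfl fun i _ => hM σ i]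
    exact gen_coeff Finset.univ (fun i => if σ i = i then (1:ℝ) else 0)
      (fun i => if σ i = i then r i else 0) (fun i => A (σ i) i) m
  rw [Matrix.det_apply, MvPolynomial.coeff_sum]
  rw [Finset.sum_eq_single (1 : Equiv.Perm (Fin d))]
  · rw [Equiv.Perm.sign_one, one_smul, hprod]
    refine Finset.sum_congr rfl fun j _ => ?_
    simp
  · intro σ _ hσ
    have hcoeff : MvPolynomial.coeff μ (∏ i, M (σ i) i) = 0 := by
      rw [hprod]
      refine Finset.sum_eq_zero fun j _ => ?_
      obtain ⟨a, ha⟩ : ∃ a, σ a ≠ a := by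
        by_contra hc
        push_neg at hc
        exact hσ (Equiv.ext hc)
      obtain ⟨i, hij, hi⟩ : ∃ i, i ≠ j ∧ σ i ≠ i := by
        by_cases haj : a = j
        · refine ⟨σ a, ?_, fun h => ha (σ.injective h)⟩
          rw [haj] at ha ⊢; exact ha
        · exact ⟨a, haj, ha⟩
      have hzero : (∑ S ∈ ((Finset.univ.erase j).powersetCard m),
          (∏ i ∈ S, if σ i = i then r i else 0) *
            ∏ i ∈ (Finset.univ.erase j) \ S, (if σ i = i then (1:ℝ) else 0)) = 0 := by
        refine Finset.sum_eq_zero fun S hS => ?_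
        rw [Finset.mem_powersetCard] at hS
        by_cases hiS : i ∈ S
        · rw [Finset.prod_eq_zero hiS (by simp [hi]), zero_mul]
        · have hmem : i ∈ (Finset.univ.erase j) \ S :=
            Finset.mem_sdiff.2 ⟨Finset.mem_erase.2 ⟨hij, Finset.mem_univ i⟩, hiS⟩
          rw [Finset.prod_eq_zero hmem (by simp [hi]), mul_zero]
      rw [hzero, mul_zero]
    rw [Units.smul_def, MvPolynomial.coeff_smul, hcoeff, smul_zero]
  · intro h; exact absurd (Finset.mem_univ _) h
end
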